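/- Fix integers k ≥ 2, m ≥ 1, p ∈ (0,1), D > 0, and set X^max = D and B(r) = −X^max + 2rX^max/(k−1) for r = 0,…,k−1. Let X₁,…,X_n ∈ ℝ^d with ‖X_i‖₂ ≤ D, and X̄ = (1/n)∑X_i. For each client i and coordinate j, independently let U_i(j) = B(r+1) with probability (X_i(j) − B(r))/(B(r+1) − B(r)) and U_i(j) = B(r) otherwise (where r is such that X_i(j) ∈ [B(r), B(r+1)]), let T_i(j) ∼ Bin(m,p) independently, and Y_i(j) = U_i(j) + (2X^max/(k−1))·T_i(j). Let X̂ = (1/n)∑_{i=1}^n (Y_i − 2X^max m p/(k−1)·𝟙). Then E[X̂] = X̄, and E[‖X̂ − X̄‖₂²] ≤ d D²/(n(k−1)²) + (d/n)·4 m p(1−p) D²/(k−1)². -/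

import Mathlib

/-!
In each coordinate the server's error is the average of the `n` client errors, which are
independent and centred, so its mean square is `1 / n²` times the sum of their variances.
A client's message is `X_i(j)` stochastically rounded to one of the two adjacent levels, which
is unbiased with variance `(x - B r) * (B (r + 1) - x) ≤ (B (r + 1) - B r)² / 4 = D² / (k - 1)²`,
plus independent binomial noise scaled by `c = 2D / (k - 1)`, whose mean `c m p` is removed by
the server and whose variance is `c² m p (1 - p)`. Summing over the `d` coordinates gives the
bound.
-/

open MeasureTheory ProbabilityTheory

/-- The probability mass function of the binomial distribution `Bin(N, p)` at `a`. -/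
noncomputable def binomPMF (N : ℕ) (p : ℝ) (a : ℕ) : ℝ :=
  (N.choose a : ℝ) * p ^ a * (1 - p) ^ (N - a)

theorem binomPMF_eq_eval_bernsteinPolynomial (N : ℕ) (p : ℝ) (a : ℕ) :
    binomPMF N p a = (bernsteinPolynomial ℝ N a).eval p := by
  simp [binomPMF, bernsteinPolynomial]

theorem sum_binomPMF (N : ℕ) (p : ℝ) : ∑ a ∈ Finset.range (N + 1), binomPMF N p a = 1 := by
  simpa [binomPMF_eq_eval_bernsteinPolynomial, Polynomial.eval_finsetSum] using
    congrArg (Polynomial.eval p) (bernsteinPolynomial.sum ℝ N)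

theorem sum_binomPMF_mul (N : ℕ) (p : ℝ) :
    ∑ a ∈ Finset.range (N + 1), binomPMF N p a * a = N * p := by
  simpa [binomPMF_eq_eval_bernsteinPolynomial, Polynomial.eval_finsetSum, mul_comm] using
    congrArg (Polynomial.eval p) (bernsteinPolynomial.sum_smul ℝ N)

theorem sum_binomPMF_mul_sq_sub (N : ℕ) (p : ℝ) :
    ∑ a ∈ Finset.range (N + 1), binomPMF N p a * (a - N * p) ^ 2 = N * p * (1 - p) := by
  have h := congrArg (Polynomial.eval p) (bernsteinPolynomial.variance ℝ N)
  simp only [Polynomial.eval_finsetSum, Polynomial.eval_mul, Polynomial.eval_pow,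
    Polynomial.eval_sub, Polynomial.eval_X, Polynomial.eval_natCast, Polynomial.eval_one,
    nsmul_eq_mul] at h
  rw [← h]
  refine Finset.sum_congr rfl fun a _ => ?_
  rw [binomPMF_eq_eval_bernsteinPolynomial]
  ring

section FiniteRange

variable {Ω α : Type*} [MeasurableSpace Ω] [MeasurableSpace α] [MeasurableSingletonClass α]
  {μ : Measure Ω} {V : Ω → α} {s : Finset α}

theorem memLp_comp_of_ae_mem_finset [Countable α] [IsFiniteMeasure μ] (hV : Measurable V)
    (hs : ∀ᵐ ω ∂μ, V ω ∈ s) (f : α → ℝ) (q : ENNReal) : MemLp (fun ω => f (V ω)) q μ := by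
  refine MemLp.of_bound ((measurable_of_countable f).comp hV).aestronglyMeasurable
    (∑ a ∈ s, ‖f a‖) ?_
  filter_upwards [hs] with ω hω
  exact Finset.single_le_sum (f := fun a => ‖f a‖) (fun _ _ => norm_nonneg _) hω

theorem integral_comp_eq_sum_of_ae_mem_finset [Countable α] [IsFiniteMeasure μ]
    (hV : Measurable V) (hs : ∀ᵐ ω ∂μ, V ω ∈ s) (f : α → ℝ) :
    ∫ ω, f (V ω) ∂μ = ∑ a ∈ s, μ.real {ω | V ω = a} * f a := by
  have hmap : ∀ᵐ a ∂μ.map V, a ∈ (s : Set α) :=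
    (ae_map_iff hV.aemeasurable s.countable_toSet.measurableSet).mpr hs
  rw [← integral_map hV.aemeasurable (measurable_of_countable f).aestronglyMeasurable,
    ← Measure.restrict_eq_self_of_ae_mem hmap, setIntegral_finset s IntegrableOn.finset]
  refine Finset.sum_congr rfl fun a _ => ?_
  rw [map_measureReal_apply hV (measurableSet_singleton a), smul_eq_mul]
  rfl

end FiniteRange

section TwoPoint

variable {Ω α : Type*} [MeasurableSpace Ω] [MeasurableSpace α] [MeasurableSingletonClass α]
  [DecidableEq α] {μ : Measure Ω} [IsProbabilityMeasure μ] {V : Ω → α} {a b : α}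

theorem ae_mem_pair_of_measure_eq_one (hV : Measurable V)
    (hsupp : μ {ω | V ω = a ∨ V ω = b} = 1) : ∀ᵐ ω ∂μ, V ω ∈ ({a, b} : Finset α) := by
  have hmeas : MeasurableSet {ω | V ω = a ∨ V ω = b} :=
    (hV (measurableSet_singleton a)).union (hV (measurableSet_singleton b))
  filter_upwards [(ae_iff_measure_eq hmeas.nullMeasurableSet).mpr (by rw [hsupp, measure_univ])]
    with ω hω
  simpa using hω

theorem integral_comp_of_measure_pair_eq_one [Countable α] (hV : Measurable V) (hab : a ≠ b)
    (hsupp : μ {ω | V ω = a ∨ V ω = b} = 1) (f : α → ℝ) :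
    ∫ ω, f (V ω) ∂μ = (1 - μ.real {ω | V ω = b}) * f a + μ.real {ω | V ω = b} * f b := by
  have hae := ae_mem_pair_of_measure_eq_one hV hsupp
  have htotal := integral_comp_eq_sum_of_ae_mem_finset hV hae fun _ => (1 : ℝ)
  rw [integral_comp_eq_sum_of_ae_mem_finset hV hae, Finset.sum_pair hab]
  rw [Finset.sum_pair hab, integral_const, probReal_univ] at htotal
  simp only [smul_eq_mul, mul_one] at htotal
  linear_combination (-f a) * htotal

theorem integral_variance_of_stochasticRounding [Countable α] (hV : Measurable V) (hab : a ≠ b)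
    (hsupp : μ {ω | V ω = a ∨ V ω = b} = 1) {g : α → ℝ} (hg : g a ≠ g b) {x : ℝ}
    (hdist : μ.real {ω | V ω = b} = (x - g a) / (g b - g a)) :
    ∫ ω, g (V ω) ∂μ = x ∧ Var[fun ω => g (V ω); μ] = (x - g a) * (g b - x) := by
  have hq : μ.real {ω | V ω = b} * (g b - g a) = x - g a := by
    rw [hdist, div_mul_cancel₀ _ (sub_ne_zero.mpr hg.symm)]
  have hmean : ∫ ω, g (V ω) ∂μ = x := by
    rw [integral_comp_of_measure_pair_eq_one hV hab hsupp]
    linear_combination hq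
  refine ⟨hmean, ?_⟩
  have hgV : AEMeasurable (fun ω => g (V ω)) μ :=
    ((measurable_of_countable g).comp hV).aemeasurable
  rw [variance_eq_integral hgV, hmean,
    integral_comp_of_measure_pair_eq_one hV hab hsupp fun v => (g v - x) ^ 2]
  linear_combination (g a + g b - 2 * x) * hq

end TwoPoint

section Binomial

variable {Ω : Type*} [MeasurableSpace Ω] {μ : Measure Ω} [IsProbabilityMeasure μ] {T : Ω → ℕ}
  {m : ℕ} {p : ℝ}

theorem ae_mem_range_of_binomPMF (hT : Measurable T)
    (hdist : ∀ a, μ.real {ω | T ω = a} = binomPMF m p a) :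
    ∀ᵐ ω ∂μ, T ω ∈ Finset.range (m + 1) := by
  have hs : MeasurableSet (T ⁻¹' (Finset.range (m + 1) : Set ℕ)) :=
    hT (Set.toFinite _).measurableSet
  have hpre : μ.real (T ⁻¹' (Finset.range (m + 1) : Set ℕ)) = 1 := by
    rw [← sum_measureReal_preimage_singleton _ fun a _ => hT (measurableSet_singleton a)]
    exact (Finset.sum_congr rfl fun a _ => hdist a).trans (sum_binomPMF m p)
  rw [ae_iff, ← measureReal_eq_zero_iff]
  exact (measureReal_compl hs).trans (by rw [hpre, probReal_univ, sub_self])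

theorem integral_variance_of_binomPMF (hT : Measurable T)
    (hdist : ∀ a, μ.real {ω | T ω = a} = binomPMF m p a) :
    ∫ ω, (T ω : ℝ) ∂μ = m * p ∧ Var[fun ω => (T ω : ℝ); μ] = m * p * (1 - p) := by
  have hae := ae_mem_range_of_binomPMF hT hdist
  have hmean : ∫ ω, (T ω : ℝ) ∂μ = m * p := by
    rw [integral_comp_eq_sum_of_ae_mem_finset hT hae, ← sum_binomPMF_mul]
    exact Finset.sum_congr rfl fun a _ => by rw [hdist]
  refine ⟨hmean, ?_⟩
  have hTm : AEMeasurable (fun ω => (T ω : ℝ)) μ :=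
    ((measurable_of_countable _).comp hT).aemeasurable
  rw [variance_eq_integral hTm, hmean,
    integral_comp_eq_sum_of_ae_mem_finset hT hae fun a => ((a : ℝ) - m * p) ^ 2,
    ← sum_binomPMF_mul_sq_sub]
  exact Finset.sum_congr rfl fun a _ => by rw [hdist]

end Binomial

section Client

variable {Ω α : Type*} [MeasurableSpace Ω] [MeasurableSpace α] [MeasurableSingletonClass α]
  [Countable α] [DecidableEq α] {μ : Measure Ω} [IsProbabilityMeasure μ]

theorem memLp_integral_variance_le_stochasticRounding_add_binomial {V : Ω → α} {T : Ω → ℕ} {a b : α}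
    {g : α → ℝ} {m : ℕ} {x p : ℝ} (hV : Measurable V) (hT : Measurable T) (hVT : IndepFun V T μ)
    (hab : a ≠ b) (hsupp : μ {ω | V ω = a ∨ V ω = b} = 1) (hg : g a ≠ g b)
    (hVdist : μ.real {ω | V ω = b} = (x - g a) / (g b - g a))
    (hTdist : ∀ t, μ.real {ω | T ω = t} = binomPMF m p t) (c e : ℝ) :
    MemLp (fun ω => g (V ω) + c * T ω - e) 2 μ ∧
      ∫ ω, g (V ω) + c * T ω - e ∂μ = x + c * (m * p) - e ∧
      Var[fun ω => g (V ω) + c * T ω - e; μ]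
        ≤ (g b - g a) ^ 2 / 4 + c ^ 2 * (m * p * (1 - p)) := by
  obtain ⟨hVmean, hVvar⟩ := integral_variance_of_stochasticRounding hV hab hsupp hg hVdist
  obtain ⟨hTmean, hTvar⟩ := integral_variance_of_binomPMF hT hTdist
  have hgV : MemLp (fun ω => g (V ω)) 2 μ :=
    memLp_comp_of_ae_mem_finset hV (ae_mem_pair_of_measure_eq_one hV hsupp) g 2
  have hcT : MemLp (fun ω => c * (T ω : ℝ)) 2 μ :=
    memLp_comp_of_ae_mem_finset hT (ae_mem_range_of_binomPMF hT hTdist) (fun t => c * t) 2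
  have hsum : MemLp (fun ω => g (V ω) + c * T ω) 2 μ := hgV.add hcT
  refine ⟨hsum.sub (memLp_const e), ?_, ?_⟩
  · rw [integral_sub (hsum.integrable one_le_two) (integrable_const e),
      integral_add (hgV.integrable one_le_two) (hcT.integrable one_le_two), integral_const_mul,
      hVmean, hTmean, integral_const, probReal_univ, one_smul]
  · have hind : IndepFun (fun ω => g (V ω)) (fun ω => c * (T ω : ℝ)) μ :=
      hVT.comp (measurable_of_countable g) (measurable_of_countable fun t : ℕ => c * t)
    rw [variance_sub_const hsum.aestronglyMeasurable, hind.variance_fun_add hgV hcT,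
      variance_const_mul, hVvar, hTvar]
    linarith [four_mul_le_sq_add (x - g a) (g b - x)]

end Client

section Averaging

variable {Ω ι : Type*} [MeasurableSpace Ω] {μ : Measure Ω} [Fintype ι] {Z : ι → Ω → ℝ}
  {x : ι → ℝ}

theorem integral_average_eq (hZ : ∀ i, Integrable (Z i) μ) (hmean : ∀ i, ∫ ω, Z i ω ∂μ = x i) :
    ∫ ω, (1 / Fintype.card ι : ℝ) * ∑ i, Z i ω ∂μ = (1 / Fintype.card ι : ℝ) * ∑ i, x i := by
  rw [integral_const_mul, integral_finsetSum _ fun i _ => hZ i]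
  simp only [hmean]

theorem integral_sq_average_sub_le [IsProbabilityMeasure μ] (hZ : ∀ i, MemLp (Z i) 2 μ)
    (hindep : Pairwise fun i j => IndepFun (Z i) (Z j) μ) (hmean : ∀ i, ∫ ω, Z i ω ∂μ = x i)
    {σ2 : ℝ} (hvar : ∀ i, Var[Z i; μ] ≤ σ2) :
    ∫ ω, ((1 / Fintype.card ι : ℝ) * ∑ i, Z i ω - (1 / Fintype.card ι : ℝ) * ∑ i, x i) ^ 2 ∂μ
      ≤ σ2 / Fintype.card ι := by
  set N : ℝ := (Fintype.card ι : ℝ)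
  have hsum : ∑ i, Z i = fun ω => ∑ i, Z i ω := Finset.sum_fn _ _
  have hS : MemLp (fun ω => 1 / N * ∑ i, Z i ω) 2 μ :=
    (memLp_finsetSum _ fun i _ => hZ i).const_mul _
  rw [← integral_average_eq (fun i => (hZ i).integrable one_le_two) hmean,
    ← variance_eq_integral hS.aemeasurable, variance_const_mul, ← hsum,
    IndepFun.variance_sum (fun i _ => hZ i) fun i _ j _ hij => hindep hij]
  calc (1 / N) ^ 2 * ∑ i, Var[Z i; μ] ≤ (1 / N) ^ 2 * (N * σ2) := by
        gcongr
        simpa [N] using Finset.sum_le_card_nsmul Finset.univ _ σ2 fun i _ => hvar i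
    _ = σ2 / N := by
        rcases eq_or_ne N 0 with hN | hN
        · simp [hN]
        · field_simp

end Averaging

theorem integral_sum_sq_average_sub_le {Ω ι κ : Type*} [MeasurableSpace Ω] {μ : Measure Ω}
    [IsProbabilityMeasure μ] [Fintype ι] [Fintype κ] {Z : ι → κ → Ω → ℝ} {x : ι → κ → ℝ}
    (hZ : ∀ i j, MemLp (Z i j) 2 μ) (hindep : ∀ j, Pairwise fun i i' => IndepFun (Z i j) (Z i' j) μ)
    (hmean : ∀ i j, ∫ ω, Z i j ω ∂μ = x i j) {σ2 : ℝ} (hvar : ∀ i j, Var[Z i j; μ] ≤ σ2) :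
    ∫ ω, ∑ j, ((1 / Fintype.card ι : ℝ) * ∑ i, Z i j ω
        - (1 / Fintype.card ι : ℝ) * ∑ i, x i j) ^ 2 ∂μ
      ≤ Fintype.card κ * (σ2 / Fintype.card ι) := by
  have hsq : ∀ j, Integrable (fun ω => ((1 / Fintype.card ι : ℝ) * ∑ i, Z i j ω
      - (1 / Fintype.card ι : ℝ) * ∑ i, x i j) ^ 2) μ := fun j =>
    (((memLp_finsetSum _ fun i _ => hZ i j).const_mul _).sub (memLp_const _)).integrable_sq
  rw [integral_finsetSum _ fun j _ => hsq j]
  simpa using Finset.sum_le_card_nsmul Finset.univ _ _ fun j _ =>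
    integral_sq_average_sub_le (fun i => hZ i j) (hindep j) (hmean · j) (hvar · j)


theorem ProbabilityTheory.iIndepFun.indepFun_comp_sumElim {Ω κ β δ δ' : Type*}
    [MeasurableSpace Ω] [MeasurableSpace β] [MeasurableSpace δ] [MeasurableSpace δ'] {μ : Measure Ω}
    {V T : κ → Ω → β} (h : iIndepFun (fun idx => Sum.elim V T idx) μ)
    (hV : ∀ q, Measurable (V q)) (hT : ∀ q, Measurable (T q)) {q q' : κ} (hqq' : q ≠ q')
    {F : β × β → δ} {F' : β × β → δ'} (hF : Measurable F) (hF' : Measurable F') :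
    IndepFun (fun ω => F (V q ω, T q ω)) (fun ω => F' (V q' ω, T q' ω)) μ := by
  have hmeas : ∀ idx, Measurable (Sum.elim V T idx) := by
    rintro (q | q)
    exacts [hV q, hT q]
  exact (h.indepFun_prodMk_prodMk hmeas (.inl q) (.inr q) (.inl q') (.inr q')
    (by simpa using hqq') (by simp) (by simp) (by simpa using hqq')).comp hF hF'

theorem quantized_binomial_dme_mse_general
    {Ω : Type} [MeasurableSpace Ω] (μ : Measure Ω) [IsProbabilityMeasure μ]
    (d n k m : ℕ) (hk : 2 ≤ k)
    (p D : ℝ) (hD : 0 < D)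
    (X : Fin n → Fin d → ℝ)
    (B : ℕ → ℝ) (hB : ∀ r : ℕ, B r = -D + 2 * r * D / ((k : ℝ) - 1))
    (r : Fin n → Fin d → ℕ)
    (V : Fin n → Fin d → Ω → ℕ) (T : Fin n → Fin d → Ω → ℕ)
    (hmeasV : ∀ i j, Measurable (V i j)) (hmeasT : ∀ i j, Measurable (T i j))
    (hVdist : ∀ i j, (μ {ω | V i j ω = r i j + 1}).toReal
        = (X i j - B (r i j)) / (B (r i j + 1) - B (r i j)))
    (hVsupp : ∀ i j, μ {ω | V i j ω = r i j ∨ V i j ω = r i j + 1} = 1)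
    (hTdist : ∀ i j a, (μ {ω | T i j ω = a}).toReal = binomPMF m p a)
    (hindep : iIndepFun
      (fun idx : (Fin n × Fin d) ⊕ (Fin n × Fin d) =>
        Sum.elim (fun q => V q.1 q.2) (fun q => T q.1 q.2) idx) μ) :
    (∀ j, ∫ ω, (1 / n : ℝ) *
          ∑ i, (B (V i j ω) + 2 * D / ((k : ℝ) - 1) * T i j ω
            - 2 * D * m * p / ((k : ℝ) - 1)) ∂μ
        = (1 / n : ℝ) * ∑ i, X i j)
    ∧ ∫ ω, ∑ j, ((1 / n : ℝ) *
            ∑ i, (B (V i j ω) + 2 * D / ((k : ℝ) - 1) * T i j ω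
              - 2 * D * m * p / ((k : ℝ) - 1))
          - (1 / n : ℝ) * ∑ i, X i j) ^ 2 ∂μ
        ≤ d * D ^ 2 / (n * ((k : ℝ) - 1) ^ 2)
          + (d / n : ℝ) * (4 * m * p * (1 - p) * D ^ 2 / ((k : ℝ) - 1) ^ 2) := by
  set c := 2 * D / ((k : ℝ) - 1) with hc
  set e := 2 * D * m * p / ((k : ℝ) - 1)
  have hgap : ∀ a : ℕ, B (a + 1) - B a = c := fun a => by rw [hB, hB]; push_cast; ring
  have hc0 : c ≠ 0 :=
    (div_pos (by linarith) (by linarith [(Nat.ofNat_le_cast.mpr hk : (2 : ℝ) ≤ k)])).ne'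
  have hclient := fun i j => memLp_integral_variance_le_stochasticRounding_add_binomial (hmeasV i j)
    (hmeasT i j) (hindep.indepFun (Sum.inl_ne_inr (a := (i, j)) (b := (i, j))))
    (Nat.succ_ne_self (r i j)).symm (hVsupp i j)
    (fun h => hc0 (by rw [← hgap, h, sub_self])) (hVdist i j) (hTdist i j) c e
  have hmean : ∀ i j, ∫ ω, B (V i j ω) + c * T i j ω - e ∂μ = X i j := fun i j =>
    (hclient i j).2.1.trans (by rw [hc]; ring)
  have hvar : ∀ i j, Var[fun ω => B (V i j ω) + c * T i j ω - e; μ]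
      ≤ c ^ 2 / 4 + c ^ 2 * (m * p * (1 - p)) := fun i j => by
    simpa only [hgap] using (hclient i j).2.2
  have hmessage : Measurable fun vt : ℕ × ℕ => B vt.1 + c * vt.2 - e := measurable_of_countable _
  have hindepClients : ∀ j, Pairwise fun i i' => IndepFun
      (fun ω => B (V i j ω) + c * T i j ω - e) (fun ω => B (V i' j ω) + c * T i' j ω - e) μ :=
    fun j i i' hii' => hindep.indepFun_comp_sumElim (fun q => hmeasV q.1 q.2)
      (fun q => hmeasT q.1 q.2) (q := (i, j)) (q' := (i', j)) (by simpa using hii')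
      hmessage hmessage
  constructor
  · intro j
    simpa only [Fintype.card_fin] using
      integral_average_eq (fun i => (hclient i j).1.integrable one_le_two) (hmean · j)
  · have hmse :=
      integral_sum_sq_average_sub_le (fun i j => (hclient i j).1) hindepClients hmean hvar
    simp only [Fintype.card_fin] at hmse
    refine hmse.trans_eq ?_
    rw [hc]
    simp only [div_eq_mul_inv, mul_inv, ← inv_pow]
    ring

/-- MSE of stochastic `k`-level quantization + Binomial noise:
with `X^max = D`, bin levels `B(r) = -D + 2rD/(k-1)`, stochastic quantization
indices `V i j`, binomial noises `T i j ~ Bin(m,p)`, all jointly independent,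
the debiased server estimate is unbiased and
`E‖X̂ - X̄‖² ≤ dD²/(n(k-1)²) + (d/n)·4mp(1-p)D²/(k-1)²`. -/
theorem quantized_binomial_dme_mse
    {Ω : Type} [MeasurableSpace Ω] (μ : Measure Ω) [IsProbabilityMeasure μ]
    (d n k m : ℕ) (hn : 1 ≤ n) (hk : 2 ≤ k) (hm : 1 ≤ m)
    (p D : ℝ) (hp : 0 < p) (hp1 : p < 1) (hD : 0 < D)
    (X : Fin n → Fin d → ℝ) (hX : ∀ i, Real.sqrt (∑ j, (X i j) ^ 2) ≤ D)
    (B : ℕ → ℝ) (hB : ∀ r : ℕ, B r = -D + 2 * r * D / ((k : ℝ) - 1))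
    (r : Fin n → Fin d → ℕ)
    (hrk : ∀ i j, r i j + 1 ≤ k - 1)
    (hrX : ∀ i j, B (r i j) ≤ X i j ∧ X i j ≤ B (r i j + 1))
    (V : Fin n → Fin d → Ω → ℕ) (T : Fin n → Fin d → Ω → ℕ)
    (hmeasV : ∀ i j, Measurable (V i j)) (hmeasT : ∀ i j, Measurable (T i j))
    (hVdist : ∀ i j, (μ {ω | V i j ω = r i j + 1}).toReal
        = (X i j - B (r i j)) / (B (r i j + 1) - B (r i j)))
    (hVsupp : ∀ i j, μ {ω | V i j ω = r i j ∨ V i j ω = r i j + 1} = 1)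
    (hTdist : ∀ i j a, (μ {ω | T i j ω = a}).toReal = binomPMF m p a)
    (hindep : iIndepFun
      (fun idx : (Fin n × Fin d) ⊕ (Fin n × Fin d) =>
        Sum.elim (fun q => V q.1 q.2) (fun q => T q.1 q.2) idx) μ) :
    (∀ j, ∫ ω, (1 / n : ℝ) *
          ∑ i, (B (V i j ω) + 2 * D / ((k : ℝ) - 1) * T i j ω
            - 2 * D * m * p / ((k : ℝ) - 1)) ∂μ
        = (1 / n : ℝ) * ∑ i, X i j)
    ∧ ∫ ω, ∑ j, ((1 / n : ℝ) *
            ∑ i, (B (V i j ω) + 2 * D / ((k : ℝ) - 1) * T i j ω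
              - 2 * D * m * p / ((k : ℝ) - 1))
          - (1 / n : ℝ) * ∑ i, X i j) ^ 2 ∂μ
        ≤ d * D ^ 2 / (n * ((k : ℝ) - 1) ^ 2)
          + (d / n : ℝ) * (4 * m * p * (1 - p) * D ^ 2 / ((k : ℝ) - 1) ^ 2) :=
  quantized_binomial_dme_mse_general μ d n k m hk p D hD X B hB r V T hmeasV hmeasT hVdist hVsupp
    hTdist hindep
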